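/- Let D be an abelian monoidal category with right exact tensor product in both variables, A an algebra object, M a right A-module object, and I a nilpotent ideal of A (Iᵏ = 0 for some k). If MI = M then M = 0. -/

import Mathlib

open CategoryTheory MonoidalCategory CategoryTheory.Limits

section

variable {C : Type*} [Category C] [MonoidalCategory C] [Abelian C]

/-- A subobject `X ↪ A` of an algebra object `A` is a (two-sided) ideal if left and
right multiplication by `A` factor through it. -/
def IsIdealSub (A : Mon C) (X : Subobject A.X) : Prop :=
  (∃ l : A.X ⊗ (X : C) ⟶ (X : C), l ≫ X.arrow = (𝟙 A.X ⊗ₘ X.arrow) ≫ MonObj.mul (X := A.X)) ∧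
  (∃ r : (X : C) ⊗ A.X ⟶ (X : C), r ≫ X.arrow = (X.arrow ⊗ₘ 𝟙 A.X) ≫ MonObj.mul (X := A.X))

/-- The product `XY` of two subobjects of an algebra object `A`: the image of
`X ⊗ Y ⟶ A ⊗ A ⟶ A`. -/
noncomputable def subMul (A : Mon C) (X Y : Subobject A.X) : Subobject A.X :=
  Subobject.mk (image.ι ((X.arrow ⊗ₘ Y.arrow) ≫ MonObj.mul (X := A.X)))

/-- `subPow A X n` is the `(n+1)`-st power of the subobject `X` of `A`. -/
noncomputable def subPow (A : Mon C) (X : Subobject A.X) : ℕ → Subobject A.X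
  | 0 => X
  | n + 1 => subMul A (subPow A X n) X

end

/-!
If `MJ = M` and `MI = M`, then `M(JI) = (MJ)I = MI = M`: associativity of the action turns
`M ⊗ J ⊗ I ⟶ M` into `(M ⊗ J ⟶ M) ⊗ I` followed by `M ⊗ I ⟶ M`, and `- ⊗ I` preserves
epimorphisms. By induction `MIⁿ = M` for all `n`, so nilpotency of `I` makes the zero map
`M ⊗ 0 ⟶ M` an epimorphism, i.e. `M = 0`.
-/

namespace CategoryTheory.MonoidalCategory

variable {D : Type*} [Category D] [MonoidalCategory D]

lemma epi_whiskerLeft_arrow_comp_of_factors {M N X Y : D} (S : Subobject X) {h : Y ⟶ X}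
    (hS : S.Factors h) (φ : M ⊗ X ⟶ N) [Epi (M ◁ h ≫ φ)] : Epi (M ◁ S.arrow ≫ φ) := by
  have hφ : M ◁ h ≫ φ = M ◁ S.factorThru h hS ≫ M ◁ S.arrow ≫ φ := by
    rw [← whiskerLeft_comp_assoc, S.factorThru_arrow]
  have : Epi (M ◁ S.factorThru h hS ≫ M ◁ S.arrow ≫ φ) := hφ ▸ inferInstance
  exact epi_of_epi (M ◁ S.factorThru h hS) _

lemma isZero_of_epi_whiskerLeft_zero_comp [HasZeroMorphisms D] {M N X Y : D}
    [(tensorLeft M).PreservesZeroMorphisms] (φ : M ⊗ X ⟶ N) (h : Epi (M ◁ (0 : Y ⟶ X) ≫ φ)) :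
    IsZero N := by
  have hzero : M ◁ (0 : Y ⟶ X) = 0 := (tensorLeft M).map_zero Y X
  rw [hzero, zero_comp] at h
  exact IsZero.of_epi_zero (M ⊗ Y) N

variable {A : Mon D} {M : D} {act : M ⊗ A.X ⟶ M}

lemma whiskerLeft_tensorHom_mul_comp_act
    (hassoc : M ◁ MonObj.mul (X := A.X) ≫ act = (α_ M A.X A.X).inv ≫ act ▷ A.X ≫ act)
    {X Y : D} (f : X ⟶ A.X) (g : Y ⟶ A.X) :
    M ◁ ((f ⊗ₘ g) ≫ MonObj.mul (X := A.X)) ≫ act =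
      (α_ M X Y).inv ≫ (M ◁ f ≫ act) ▷ Y ≫ M ◁ g ≫ act := by
  rw [whiskerLeft_comp_assoc, hassoc, tensorHom_def, whiskerLeft_comp_assoc,
    associator_inv_naturality_right_assoc, associator_inv_naturality_middle_assoc,
    whisker_exchange_assoc, comp_whiskerRight, Category.assoc]

variable [Abelian D]
    (hassoc : M ◁ MonObj.mul (X := A.X) ≫ act = (α_ M A.X A.X).inv ≫ act ▷ A.X ≫ act)
include hassoc

lemma epi_whiskerLeft_subMul_arrow_comp_act {I J : Subobject A.X}
    [(tensorRight (I : D)).PreservesEpimorphisms]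
    (hJ : Epi (M ◁ J.arrow ≫ act)) (hI : Epi (M ◁ I.arrow ≫ act)) :
    Epi (M ◁ (subMul A J I).arrow ≫ act) := by
  have : Epi (M ◁ ((J.arrow ⊗ₘ I.arrow) ≫ MonObj.mul (X := A.X)) ≫ act) := by
    rw [whiskerLeft_tensorHom_mul_comp_act hassoc]
    have : Epi ((M ◁ J.arrow ≫ act) ▷ (I : D)) := (tensorRight (I : D)).map_epi _
    infer_instance
  exact epi_whiskerLeft_arrow_comp_of_factors _
    ((Subobject.mk_factors_iff _ _).2 ⟨factorThruImage _, image.fac _⟩) act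

lemma epi_whiskerLeft_subPow_arrow_comp_act {I : Subobject A.X}
    [(tensorRight (I : D)).PreservesEpimorphisms] (hI : Epi (M ◁ I.arrow ≫ act)) (n : ℕ) :
    Epi (M ◁ (subPow A I n).arrow ≫ act) := by
  induction n with
  | zero => exact hI
  | succ n ih => exact epi_whiskerLeft_subMul_arrow_comp_act hassoc ih hI

end CategoryTheory.MonoidalCategory

theorem stmt11_general {D : Type*} [Category D] [MonoidalCategory D] [Abelian D]
    (hre : ∀ Z : D, Nonempty (PreservesFiniteColimits (tensorLeft Z)) ∧
      Nonempty (PreservesFiniteColimits (tensorRight Z)))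
    (A : Mon D) (M : D) (act : M ⊗ A.X ⟶ M)
    (hassoc : (𝟙 M ⊗ₘ MonObj.mul (X := A.X)) ≫ act = (α_ M A.X A.X).inv ≫ (act ⊗ₘ 𝟙 A.X) ≫ act)
    (I : Subobject A.X)
    (hnil : ∃ n : ℕ, subPow A I n = ⊥)
    (hMI : Epi ((𝟙 M ⊗ₘ I.arrow) ≫ act)) :
    IsZero M := by
  have := (hre M).1.some
  have := (hre (I : D)).2.some
  rw [id_tensorHom, tensorHom_id] at hassoc
  rw [id_tensorHom] at hMI
  obtain ⟨n, hn⟩ := hnil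
  have hMIn := epi_whiskerLeft_subPow_arrow_comp_act hassoc hMI n
  rw [hn, Subobject.bot_arrow] at hMIn
  exact isZero_of_epi_whiskerLeft_zero_comp act hMIn

/-- Let `D` be an abelian monoidal category with right exact
tensor product in both variables, `A` an algebra object, `(M, act)` a right
`A`-module object and `I` a nilpotent ideal of `A`.  If `MI = M` (i.e. the
composite `M ⊗ I ⟶ M ⊗ A ⟶ M` is an epimorphism) then `M = 0`. -/
theorem stmt11 {D : Type*} [Category D] [MonoidalCategory D] [Abelian D]
    (hre : ∀ Z : D, Nonempty (PreservesFiniteColimits (tensorLeft Z)) ∧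
      Nonempty (PreservesFiniteColimits (tensorRight Z)))
    (A : Mon D) (M : D) (act : M ⊗ A.X ⟶ M)
    (hunit : (𝟙 M ⊗ₘ MonObj.one (X := A.X)) ≫ act = (ρ_ M).hom)
    (hassoc : (𝟙 M ⊗ₘ MonObj.mul (X := A.X)) ≫ act = (α_ M A.X A.X).inv ≫ (act ⊗ₘ 𝟙 A.X) ≫ act)
    (I : Subobject A.X) (hI : IsIdealSub A I)
    (hnil : ∃ n : ℕ, subPow A I n = ⊥)
    (hMI : Epi ((𝟙 M ⊗ₘ I.arrow) ≫ act)) :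
    IsZero M :=
  stmt11_general hre A M act hassoc I hnil hMI
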